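/- No-noise multimode classification: let K be a real 2n×2n matrix such that |w₁ᵀ K Δ Kᵀ w₂| ≥ |w₁ᵀ Δ w₂| for all real vectors w₁, w₂ ∈ ℝ^{2n}, where Δ is the standard symplectic form. Then K Δ Kᵀ = (1/λ) Δ for some real λ with 0 < |λ| ≤ 1; consequently K = S · κ I with κ = 1/√λ ≥ 1 and S symplectic when λ > 0, or K = S T κ I with T the total time-reversal when λ < 0. -/

import Mathlib

/-- The standard symplectic form `Δ = ⊕ₖ [[0,1],[-1,0]]` on `ℝ^{2n}`. -/
noncomputable def sympForm (n : ℕ) : Matrix (Fin (2 * n)) (Fin (2 * n)) ℝ :=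
  Matrix.of fun i j =>
    if (i : ℕ) % 2 = 0 ∧ (j : ℕ) = (i : ℕ) + 1 then 1
    else if (j : ℕ) % 2 = 0 ∧ (i : ℕ) = (j : ℕ) + 1 then -1
    else 0

/-- The total time-reversal `T = ⊕ₖ diag(1,-1)` on `ℝ^{2n}`. -/
noncomputable def timeRev (n : ℕ) : Matrix (Fin (2 * n)) (Fin (2 * n)) ℝ :=
  Matrix.diagonal fun i => if (i : ℕ) % 2 = 0 then 1 else -1

/-!
Orthogonality for the form `K Δ Kᵀ` implies orthogonality for `Δ`, so `Δ v` lies on the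
line through `K Δ Kᵀ v` for every `v`. Since `Δ` is invertible, `v` and `Δ⁻¹ K Δ Kᵀ v` are
then collinear for every `v`, so `Δ⁻¹ K Δ Kᵀ` is a homothety: `K Δ Kᵀ = a Δ`. Evaluating the
hypothesis on a pair of conjugate basis vectors gives `|a| ≥ 1`. Taking `λ = a⁻¹`, the matrix
`√|λ| K` (or `√|λ| K T` when `λ < 0`, as `T Δ Tᵀ = -Δ`) is symplectic.
-/

open Matrix

section Proportional

variable {𝕜 ι : Type*} [Field 𝕜] [Fintype ι] [DecidableEq ι]

theorem mem_span_singleton_of_dotProduct_eq_zero_imp {f g : ι → 𝕜}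
    (h : ∀ w, w ⬝ᵥ g = 0 → w ⬝ᵥ f = 0) : f ∈ 𝕜 ∙ g := by
  have hspan := mem_span_of_iInf_ker_le_ker (ι := Unit)
    (L := fun _ => (dotProductBilin 𝕜 𝕜).flip g) (K := (dotProductBilin 𝕜 𝕜).flip f)
    fun w hw => by simpa using h w (by simpa using hw)
  rw [Set.range_const, Submodule.mem_span_singleton] at hspan
  obtain ⟨c, hc⟩ := hspan
  refine Submodule.mem_span_singleton.2 ⟨c, funext fun i => ?_⟩
  simpa using LinearMap.congr_fun hc (Pi.single i 1)

theorem exists_eq_smul_of_mulVec_mem_span_singleton {B C D : Matrix ι ι 𝕜} (hDC : D * C = 1)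
    (h : ∀ v, C *ᵥ v ∈ 𝕜 ∙ (B *ᵥ v)) : ∃ a : 𝕜, B = a • C := by
  obtain ⟨a, ha⟩ := LinearMap.exists_eq_smul_id_of_forall_notLinearIndependent
    (f := toLin' (D * B)) fun v hli => by
      obtain ⟨c, hc⟩ := Submodule.mem_span_singleton.1 (h v)
      have hv : v - c • (D * B) *ᵥ v = 0 := by
        rw [← mulVec_mulVec, ← mulVec_smul, hc, mulVec_mulVec, hDC, one_mulVec, sub_self]
      have := LinearIndependent.pair_iff.1 hli 1 (-c) (by simpa [sub_eq_add_neg] using hv)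
      exact one_ne_zero this.1
  have hDB : D * B = a • 1 := toLin'.injective (by rw [ha, map_smul, toLin'_one]; rfl)
  refine ⟨a, ?_⟩
  calc B = C * (D * B) := by rw [← Matrix.mul_assoc, mul_eq_one_comm.1 hDC, Matrix.one_mul]
    _ = a • C := by rw [hDB, Matrix.mul_smul, Matrix.mul_one]

theorem exists_eq_smul_of_dotProduct_mulVec_eq_zero_imp {B C D : Matrix ι ι 𝕜}
    (hDC : D * C = 1) (h : ∀ w v, w ⬝ᵥ (B *ᵥ v) = 0 → w ⬝ᵥ (C *ᵥ v) = 0) :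
    ∃ a : 𝕜, B = a • C :=
  exists_eq_smul_of_mulVec_mem_span_singleton hDC fun v =>
    mem_span_singleton_of_dotProduct_eq_zero_imp (h · v)

end Proportional

section Rescaling

variable {ι : Type*} [Fintype ι] {J K : Matrix ι ι ℝ} {c : ℝ}

theorem exists_mul_mul_transpose_eq_of_eq_inv_smul (hc : 0 < c)
    (hK : K * J * Kᵀ = c⁻¹ • J) :
    ∃ S : Matrix ι ι ℝ, S * J * Sᵀ = J ∧ K = (1 / Real.sqrt c) • S := by
  refine ⟨Real.sqrt c • K, ?_, ?_⟩
  · rw [transpose_smul, Matrix.smul_mul, Matrix.smul_mul, Matrix.mul_smul, hK, smul_smul,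
      smul_smul, Real.mul_self_sqrt hc.le, mul_inv_cancel₀ hc.ne', one_smul]
  · rw [smul_smul, one_div, inv_mul_cancel₀ (Real.sqrt_pos.2 hc).ne', one_smul]

theorem exists_mul_mul_transpose_eq_of_eq_inv_smul_of_neg [DecidableEq ι] {T : Matrix ι ι ℝ}
    (hT : T * J * Tᵀ = -J) (hTT : T * T = 1) (hc : c < 0) (hK : K * J * Kᵀ = c⁻¹ • J) :
    ∃ S : Matrix ι ι ℝ, S * J * Sᵀ = J ∧ K = (1 / Real.sqrt (-c)) • (S * T) := by
  have hKT : (K * T) * J * (K * T)ᵀ = (-c)⁻¹ • J := by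
    calc (K * T) * J * (K * T)ᵀ = K * (T * J * Tᵀ) * Kᵀ := by
          simp only [transpose_mul, Matrix.mul_assoc]
      _ = (-c)⁻¹ • J := by
          rw [hT, Matrix.mul_neg, Matrix.neg_mul, hK, inv_neg, neg_smul]
  obtain ⟨S, hS, hKTS⟩ := exists_mul_mul_transpose_eq_of_eq_inv_smul (neg_pos.2 hc) hKT
  refine ⟨S, hS, ?_⟩
  calc K = K * T * T := by rw [Matrix.mul_assoc, hTT, Matrix.mul_one]
    _ = (1 / Real.sqrt (-c)) • (S * T) := by rw [hKTS, Matrix.smul_mul]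

end Rescaling

section SympForm

lemma sympForm_mul_self (n : ℕ) : sympForm n * sympForm n = -1 := by
  ext i j
  have hi := i.isLt
  let p : Fin (2 * n) := ⟨if (i : ℕ) % 2 = 0 then i + 1 else i - 1, by split_ifs <;> omega⟩
  rw [mul_apply, Finset.sum_eq_single p]
  · simp only [sympForm, of_apply, Matrix.neg_apply, Matrix.one_apply, p, Fin.ext_iff]
    split_ifs <;> first | omega | norm_num
  · intro k _ hk
    have hkp : (k : ℕ) ≠ p := Fin.val_ne_of_ne hk
    simp only [sympForm, of_apply, p] at hkp ⊢
    split_ifs at hkp ⊢ <;> first | omega | simp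
  · simp

lemma sympForm_zero_one {n : ℕ} (hn : 0 < n) :
    sympForm n ⟨0, by omega⟩ ⟨1, by omega⟩ = 1 := by
  simp [sympForm]

lemma timeRev_mul_sympForm_mul_transpose (n : ℕ) :
    timeRev n * sympForm n * (timeRev n)ᵀ = -sympForm n := by
  ext i j
  simp only [timeRev, diagonal_transpose, mul_diagonal, diagonal_mul, sympForm,
    Matrix.neg_apply, of_apply]
  split_ifs <;> first | omega | norm_num

lemma timeRev_mul_self (n : ℕ) : timeRev n * timeRev n = 1 := by
  rw [timeRev, diagonal_mul_diagonal, ← diagonal_one]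
  congr 1
  funext i
  split_ifs <;> norm_num

theorem exists_eq_smul_sympForm_of_abs_dotProduct_le {n : ℕ}
    {A : Matrix (Fin (2 * n)) (Fin (2 * n)) ℝ}
    (h : ∀ w₁ w₂ : Fin (2 * n) → ℝ,
      |w₁ ⬝ᵥ (sympForm n *ᵥ w₂)| ≤ |w₁ ⬝ᵥ (A *ᵥ w₂)|) :
    ∃ a : ℝ, 1 ≤ |a| ∧ A = a • sympForm n := by
  rcases Nat.eq_zero_or_pos n with rfl | hn
  · exact ⟨1, by simp, by ext i; exact absurd i.isLt (by omega)⟩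
  have hinv : (-sympForm n) * sympForm n = 1 := by rw [Matrix.neg_mul, sympForm_mul_self, neg_neg]
  obtain ⟨a, ha⟩ := exists_eq_smul_of_dotProduct_mulVec_eq_zero_imp (B := A) hinv
    fun w v hw => by simpa [hw] using h w v
  refine ⟨a, ?_, ha⟩
  simpa [ha, sympForm_zero_one hn] using
    h (Pi.single ⟨0, by omega⟩ 1) (Pi.single ⟨1, by omega⟩ 1)

end SympForm

/-- No-noise multimode classification: if `K` is a real `2n×2n` matrix with
`|w₁ᵀ (K Δ Kᵀ) w₂| ≥ |w₁ᵀ Δ w₂|` for all real `w₁, w₂`, then `K Δ Kᵀ = (1/λ) Δ` for some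
`λ` with `0 < |λ| ≤ 1`; consequently `K = κ S` with `κ = 1/√|λ| ≥ 1` and `S` symplectic when
`λ > 0`, and `K = κ (S T)` with `T` the total time-reversal when `λ < 0`. -/
theorem no_noise_classification
    (n : ℕ) (K : Matrix (Fin (2 * n)) (Fin (2 * n)) ℝ)
    (h : ∀ w₁ w₂ : Fin (2 * n) → ℝ,
      |dotProduct w₁ ((sympForm n).mulVec w₂)| ≤
        |dotProduct w₁ ((K * sympForm n * K.transpose).mulVec w₂)|) :
    ∃ lam : ℝ, 0 < |lam| ∧ |lam| ≤ 1 ∧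
      K * sympForm n * K.transpose = (1 / lam) • sympForm n ∧
      (1 : ℝ) ≤ 1 / Real.sqrt |lam| ∧
      (0 < lam → ∃ S : Matrix (Fin (2 * n)) (Fin (2 * n)) ℝ,
        S * sympForm n * S.transpose = sympForm n ∧ K = (1 / Real.sqrt lam) • S) ∧
      (lam < 0 → ∃ S : Matrix (Fin (2 * n)) (Fin (2 * n)) ℝ,
        S * sympForm n * S.transpose = sympForm n ∧
          K = (1 / Real.sqrt (-lam)) • (S * timeRev n)) := by
  obtain ⟨a, ha, hKa⟩ := exists_eq_smul_sympForm_of_abs_dotProduct_le h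
  have hK : K * sympForm n * Kᵀ = (a⁻¹)⁻¹ • sympForm n := by rw [inv_inv, hKa]
  refine ⟨a⁻¹, abs_pos.2 (inv_ne_zero (abs_pos.1 (by linarith))), ?_, by rw [one_div, hK], ?_,
    fun hpos => exists_mul_mul_transpose_eq_of_eq_inv_smul hpos hK,
    fun hneg => exists_mul_mul_transpose_eq_of_eq_inv_smul_of_neg
      (timeRev_mul_sympForm_mul_transpose n) (timeRev_mul_self n) hneg hK⟩
  · rw [abs_inv]
    exact inv_le_one_of_one_le₀ ha
  · rw [abs_inv, Real.sqrt_inv, one_div, inv_inv]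
    exact Real.one_le_sqrt.2 ha
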